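/- A semigroup that embeds into a direct power L^I of L = {0,+,−} (with 0 an identity and +,− left zeros) is a left regular band satisfying condition (CC): whenever ab = a, ba = b, and a and b lie in the same connected component of the poset S_{a,b} = {s : sa = sb} (ordered by x ≤ y iff yx = x), then a = b. In particular, L itself satisfies (CC). -/

import Mathlib

/-- L = {0,+,−} with 0 an identity and +, − left zeros. -/
inductive L : Type
  | zero | pos | neg
deriving DecidableEq

instance : Mul L :=
  ⟨fun a b => match a with
    | .zero => b
    | .pos => .pos
    | .neg => .neg⟩

/-!
The identities `x * x = x` and `x * y * x = x * y` hold coordinatewise in `L`, so they pass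
to any subsemigroup of `L^I`.
For (CC), fix a coordinate `f : S → L` with `f a ≠ f b`. Every `s` with `s * a = s * b` then has
`f s ≠ 0`, i.e. `f s` is a left zero, so `y * x = x` with `y` in `S_{a,b}` forces `f x = f y`.
Hence `f` is constant on connected components of `S_{a,b}`, and `a`, `b` cannot share one.
So `a` and `b` agree in every coordinate.
-/

namespace L

theorem mul_self (u : L) : u * u = u := by
  cases u <;> rfl

theorem mul_mul_self (u v : L) : u * v * u = u * v := by
  cases u <;> cases v <;> rfl

theorem mul_eq_left_of_ne_zero {s : L} (hs : s ≠ zero) (t : L) : s * t = s := by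
  cases s
  exacts [absurd rfl hs, rfl, rfl]

theorem ne_zero_of_mul_eq_mul {s p q : L} (h : s * p = s * q) (hpq : p ≠ q) : s ≠ zero := by
  rintro rfl
  exact hpq h

end L

theorem MulHom.map_eq_of_eqvGen_equalizer {T : Type*} [Mul T] (f : T →ₙ* L) {a b : T}
    (h : Relation.EqvGen (fun x y : T => x * a = x * b ∧ y * a = y * b ∧ y * x = x) a b) :
    f a = f b := by
  by_contra hab
  have hker : (fun x y : T => x * a = x * b ∧ y * a = y * b ∧ y * x = x) ≤
      fun x y => f x = f y := by
    rintro x y ⟨-, hy, hyx⟩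
    have hy0 : f y ≠ .zero := L.ne_zero_of_mul_eq_mul (by rw [← map_mul, hy, map_mul]) hab
    calc f x = f (y * x) := by rw [hyx]
      _ = f y := by rw [map_mul, L.mul_eq_left_of_ne_zero hy0]
  exact hab <| (InvImage.equivalence _ f eq_equivalence).eqvGen_iff.1 <|
    Relation.EqvGen.mono hker _ _ h

/-- A semigroup embedding into a direct power of L is a left regular band satisfying
condition (CC); in particular L itself satisfies (CC). -/
theorem embeds_in_power_of_L_implies_CC (S : Type*) [Semigroup S] (I : Type*)
    (φ : S → I → L) (hom : ∀ x y : S, φ (x * y) = φ x * φ y)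
    (hinj : Function.Injective φ) :
    (∀ x : S, x * x = x) ∧
    (∀ x y : S, x * y * x = x * y) ∧
    (∀ a b : S, a * b = a → b * a = b →
      Relation.EqvGen
        (fun x y : S => x * a = x * b ∧ y * a = y * b ∧ y * x = x) a b → a = b) ∧
    (∀ a b : L, a * b = a → b * a = b →
      Relation.EqvGen
        (fun x y : L => x * a = x * b ∧ y * a = y * b ∧ y * x = x) a b → a = b) := by
  let ψ : S →ₙ* (I → L) := ⟨φ, hom⟩
  refine ⟨fun x => hinj ?_, fun x y => hinj ?_, fun a b _ _ h => hinj ?_,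
    fun a b _ _ h => (MulHom.id L).map_eq_of_eqvGen_equalizer h⟩
  · rw [hom]
    funext i
    exact L.mul_self _
  · rw [hom, hom]
    funext i
    exact L.mul_mul_self _ _
  · funext i
    exact ((Pi.evalMulHom _ i).comp ψ).map_eq_of_eqvGen_equalizer h
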